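/- Existence of a minimal decisive singleton: for a social welfare function satisfying Pareto and IIA on at least 3 alternatives with finitely many individuals, there exists an individual i such that {i} is a decisive coalition. -/

import Mathlib

/-!
A coalition is *almost decisive* for `(a, b)` if it wins `a ≻ b` whenever everybody outside it
prefers `b`. Field expansion: almost decisiveness on a single pair already gives decisiveness,
because IIA lets us redraw the profile around a third alternative `c` so that Pareto and the
almost decisive pair combine by transitivity. Group contraction: if `D₁ ∪ D₂` is decisive, give
`D₁` the order `a > b > c`, `D₂` the order `b > c > a` and the rest `c > a > b`; society ranks
`b ≻ c`, hence either `a ≻ c`, which makes `D₁` almost decisive, or `b ≻ a`, which makes `D₂` so.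
Removing one individual at a time from the grand coalition leaves a decisive singleton.
-/

/-- A strict linear order (complete, transitive, irreflexive preference) on `X`. -/
def SLO (X : Type*) : Type _ := {r : X → X → Prop // IsStrictTotalOrder X r}

/-- Pareto: unanimous strict preference is replicated socially. -/
def Pareto {X ι : Type*} (f : (ι → SLO X) → SLO X) : Prop :=
  ∀ P : ι → SLO X, ∀ a b : X, (∀ i, (P i).1 a b) → (f P).1 a b

/-- Independence of irrelevant alternatives. -/
def IIA {X ι : Type*} (f : (ι → SLO X) → SLO X) : Prop :=
  ∀ P P' : ι → SLO X, ∀ a b : X,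
    (∀ i, (P i).1 a b ↔ (P' i).1 a b) → ((f P).1 a b ↔ (f P').1 a b)

/-- A coalition `D` is `(a,b)`-decisive. -/
def PairDecisive {X ι : Type*} (f : (ι → SLO X) → SLO X) (D : Set ι) (a b : X) : Prop :=
  ∀ P : ι → SLO X, (∀ i ∈ D, (P i).1 a b) → (f P).1 a b

/-- A coalition is decisive if it is `(a,b)`-decisive for all distinct `a, b`. -/
def Decisive {X ι : Type*} (f : (ι → SLO X) → SLO X) (D : Set ι) : Prop :=
  ∀ a b : X, a ≠ b → PairDecisive f D a b

/-- `d` is a dictator for `f`. -/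
def IsDictator {X ι : Type*} (f : (ι → SLO X) → SLO X) (d : ι) : Prop :=
  ∀ P : ι → SLO X, ∀ a b : X, (P d).1 a b → (f P).1 a b

namespace SLO

variable {X : Type*}

instance : Nonempty (SLO X) := ⟨⟨WellOrderingRel, inferInstance⟩⟩

theorem irrefl (r : SLO X) (x : X) : ¬ r.1 x x := r.2.irrefl x

theorem trans (r : SLO X) {x y z : X} (hxy : r.1 x y) (hyz : r.1 y z) : r.1 x z :=
  r.2.trans x y z hxy hyz

theorem asymm (r : SLO X) {x y : X} (hxy : r.1 x y) : ¬ r.1 y x :=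
  fun hyx => r.irrefl x (r.trans hxy hyx)

theorem rel_of_not_rel (r : SLO X) {x y : X} (hne : x ≠ y) (h : ¬ r.1 x y) : r.1 y x := by
  by_contra h'
  exact hne (r.2.trichotomous x y h h')

def lexRefine {α : Type*} [LinearOrder α] (t : X → α) (r : SLO X) : SLO X :=
  ⟨fun x y => t y < t x ∨ t x = t y ∧ r.1 x y,
    { trichotomous := fun x y hxy hyx => by
        push Not at hxy hyx
        exact r.2.trichotomous x y (hxy.2 (le_antisymm hxy.1 hyx.1))
          (hyx.2 (le_antisymm hyx.1 hxy.1))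
      irrefl := fun x => by simp [r.irrefl x]
      trans := fun x y z => by
        rintro (hxy | ⟨hxy, rxy⟩) (hyz | ⟨hyz, ryz⟩)
        · exact Or.inl (hyz.trans hxy)
        · exact Or.inl (hyz ▸ hxy)
        · exact Or.inl (hxy ▸ hyz)
        · exact Or.inr ⟨hxy.trans hyz, r.trans rxy ryz⟩ }⟩

variable {α : Type*} [LinearOrder α] {t : X → α} {r : SLO X} {x y : X}

@[simp]
theorem lexRefine_rel : (lexRefine t r).1 x y ↔ t y < t x ∨ t x = t y ∧ r.1 x y := Iff.rfl

end SLO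

theorem nontrivial_of_three_le_enatCard {X : Type*} (hX : 3 ≤ ENat.card X) : Nontrivial X :=
  (ENat.one_lt_card_iff_nontrivial X).1 (lt_of_lt_of_le (by norm_num) hX)

section Arrow

variable {X ι : Type*} {f : (ι → SLO X) → SLO X} {D D₁ D₂ : Set ι} {a b c : X}

def AlmostDecisive (f : (ι → SLO X) → SLO X) (D : Set ι) (a b : X) : Prop :=
  ∀ P : ι → SLO X, (∀ i ∈ D, (P i).1 a b) → (∀ i ∉ D, (P i).1 b a) → (f P).1 a b

theorem PairDecisive.almostDecisive (h : PairDecisive f D a b) : AlmostDecisive f D a b :=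
  fun P hD _ => h P hD

theorem decisive_univ (hP : Pareto f) : Decisive f Set.univ :=
  fun a b _ P h => hP P a b fun i => h i trivial

theorem not_decisive_empty [Nontrivial X] : ¬ Decisive f ∅ := by
  obtain ⟨a, b, hab⟩ := exists_pair_ne X
  intro h
  let P : ι → SLO X := fun _ => Classical.arbitrary _
  exact (f P).asymm (h a b hab P (by simp)) (h b a hab.symm P (by simp))

open Classical in
theorem AlmostDecisive.pairDecisive_left (hP : Pareto f) (hI : IIA f)
    (h : AlmostDecisive f D a b) (hab : a ≠ b) (hca : c ≠ a) (hcb : c ≠ b) :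
    PairDecisive f D a c := by
  intro P hD
  -- `D` ranks `a > b > c`, everyone else puts `b` first; `a` versus `c` is left as in `P`
  let Q : ι → SLO X := fun i => (P i).lexRefine fun x : X =>
    if i ∈ D then (if x = a then 2 else if x = b then 1 else 0) else (if x = b then 1 else 0 : ℕ)
  have hQab : (f Q).1 a b :=
    h Q (fun i hi => by simp [Q, hi, hab.symm]) (fun i hi => by simp [Q, hi, hab])
  have hQbc : (f Q).1 b c := hP Q b c fun i => by
    by_cases hi : i ∈ D <;> simp [Q, hi, hab.symm, hca, hcb]
  refine (hI P Q a c fun i => ?_).2 ((f Q).trans hQab hQbc)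
  by_cases hi : i ∈ D <;> simp [Q, hi, hD i, hab, hca, hcb]

open Classical in
theorem AlmostDecisive.pairDecisive_right (hP : Pareto f) (hI : IIA f)
    (h : AlmostDecisive f D a b) (hab : a ≠ b) (hca : c ≠ a) (hcb : c ≠ b) :
    PairDecisive f D c b := by
  intro P hD
  -- `D` ranks `c > a > b`, everyone else puts `a` last; `c` versus `b` is left as in `P`
  let Q : ι → SLO X := fun i => (P i).lexRefine fun x : X =>
    if i ∈ D then (if x = c then 2 else if x = a then 1 else 0) else (if x = a then 0 else 1 : ℕ)
  have hQca : (f Q).1 c a := hP Q c a fun i => by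
    by_cases hi : i ∈ D <;> simp [Q, hi, hca, hca.symm]
  have hQab : (f Q).1 a b :=
    h Q (fun i hi => by simp [Q, hi, hab.symm, hca.symm, hcb.symm])
      (fun i hi => by simp [Q, hi, hab.symm])
  refine (hI P Q c b fun i => ?_).2 ((f Q).trans hQca hQab)
  by_cases hi : i ∈ D <;> simp [Q, hi, hD i, hab.symm, hca, hcb.symm]

theorem AlmostDecisive.pairDecisive_of_ne_left (hX : 3 ≤ ENat.card X) (hP : Pareto f)
    (hI : IIA f) (h : AlmostDecisive f D a b) (hab : a ≠ b) (hca : c ≠ a) :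
    PairDecisive f D a c := by
  by_cases hcb : c = b
  · obtain ⟨d, hda, hdb⟩ := ENat.exists_ne_ne_of_three_le hX a b
    subst hcb
    exact (h.pairDecisive_left hP hI hab hda hdb).almostDecisive.pairDecisive_left hP hI
      hda.symm hca hdb.symm
  · exact h.pairDecisive_left hP hI hab hca hcb

theorem AlmostDecisive.pairDecisive_of_ne_right (hX : 3 ≤ ENat.card X) (hP : Pareto f)
    (hI : IIA f) (h : AlmostDecisive f D a b) (hab : a ≠ b) (hcb : c ≠ b) :
    PairDecisive f D c b := by
  by_cases hca : c = a
  · obtain ⟨d, hda, hdb⟩ := ENat.exists_ne_ne_of_three_le hX a b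
    subst hca
    exact (h.pairDecisive_right hP hI hab hda hdb).almostDecisive.pairDecisive_right hP hI
      hdb hda.symm hab
  · exact h.pairDecisive_right hP hI hab hca hcb

theorem AlmostDecisive.decisive (hX : 3 ≤ ENat.card X) (hP : Pareto f) (hI : IIA f)
    (h : AlmostDecisive f D a b) (hab : a ≠ b) : Decisive f D := by
  intro x y hxy
  obtain ⟨w, hwx, hwa⟩ := ENat.exists_ne_ne_of_three_le hX x a
  have haw : AlmostDecisive f D a w :=
    (h.pairDecisive_of_ne_left hX hP hI hab hwa).almostDecisive
  have hxw : AlmostDecisive f D x w :=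
    (haw.pairDecisive_of_ne_right hX hP hI hwa.symm hwx.symm).almostDecisive
  exact hxw.pairDecisive_of_ne_left hX hP hI hwx.symm hxy.symm

open Classical in
theorem Decisive.or_of_union (hX : 3 ≤ ENat.card X) (hP : Pareto f) (hI : IIA f)
    (hdisj : Disjoint D₁ D₂) (h : Decisive f (D₁ ∪ D₂)) : Decisive f D₁ ∨ Decisive f D₂ := by
  have := nontrivial_of_three_le_enatCard hX
  obtain ⟨a, b, hab⟩ := exists_pair_ne X
  obtain ⟨c, hca, hcb⟩ := ENat.exists_ne_ne_of_three_le hX a b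
  let rank (x y : X) : X → ℕ := fun z => if z = x then 2 else if z = y then 1 else 0
  let P : ι → SLO X := fun i => (Classical.arbitrary (SLO X)).lexRefine
    (if i ∈ D₁ then rank a b else if i ∈ D₂ then rank b c else rank c a)
  have hbc : (f P).1 b c := h b c hcb.symm P fun i hi => by
    rcases hi with hi | hi
    · simp [P, rank, hi, hab.symm, hca, hcb]
    · simp [P, rank, hi, Set.disjoint_right.1 hdisj hi, hcb]
  by_cases hac : (f P).1 a c
  · have hD₁ : AlmostDecisive f D₁ a c := by
      intro Q hQ₁ hQ₂
      refine (hI P Q a c fun i => ?_).1 hac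
      by_cases hi₁ : i ∈ D₁
      · simp [P, rank, hi₁, hQ₁ i hi₁, hca, hcb]
      · have hQ := (Q i).asymm (hQ₂ i hi₁)
        by_cases hi₂ : i ∈ D₂ <;> simp [P, rank, hi₁, hi₂, hQ, hab, hca.symm, hcb]
    exact Or.inl (hD₁.decisive hX hP hI hca.symm)
  · have hba : (f P).1 b a := (f P).trans hbc ((f P).rel_of_not_rel hca.symm hac)
    have hD₂ : AlmostDecisive f D₂ b a := by
      intro Q hQ₂ hQ₁
      refine (hI P Q b a fun i => ?_).1 hba
      by_cases hi₂ : i ∈ D₂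
      · simp [P, rank, hi₂, Set.disjoint_right.1 hdisj hi₂, hQ₂ i hi₂, hab, hca.symm]
      · have hQ := (Q i).asymm (hQ₁ i hi₂)
        by_cases hi₁ : i ∈ D₁ <;> simp [P, rank, hi₁, hi₂, hQ, hab.symm, hca.symm, hcb.symm]
    exact Or.inr (hD₂.decisive hX hP hI hab.symm)

theorem Decisive.exists_singleton (hX : 3 ≤ ENat.card X) (hP : Pareto f) (hI : IIA f)
    {s : Finset ι} (h : Decisive f s) : ∃ i ∈ s, Decisive f {i} := by
  classical
  have := nontrivial_of_three_le_enatCard hX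
  induction s using Finset.induction_on with
  | empty => exact absurd (by simpa using h) not_decisive_empty
  | insert i s hi ih =>
    rw [Finset.coe_insert, Set.insert_eq] at h
    rcases h.or_of_union hX hP hI (Set.disjoint_singleton_left.2 hi) with h | h
    · exact ⟨i, Finset.mem_insert_self i s, h⟩
    · obtain ⟨j, hj, hj'⟩ := ih h
      exact ⟨j, Finset.mem_insert_of_mem hj, hj'⟩

end Arrow

theorem exists_decisive_singleton_general {X ι : Type*} [Fintype X] [Fintype ι]
    (hX : 3 ≤ Fintype.card X)
    (f : (ι → SLO X) → SLO X) (hP : Pareto f) (hI : IIA f) :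
    ∃ i : ι, Decisive f ({i} : Set ι) := by
  have hX' : 3 ≤ ENat.card X := by simpa using hX
  have huniv : Decisive f (Finset.univ : Finset ι) := by
    simpa using decisive_univ hP
  obtain ⟨i, -, hi⟩ := huniv.exists_singleton hX' hP hI
  exact ⟨i, hi⟩

theorem exists_decisive_singleton {X ι : Type*} [Fintype X] [Fintype ι] [Nonempty ι]
    (hX : 3 ≤ Fintype.card X)
    (f : (ι → SLO X) → SLO X) (hP : Pareto f) (hI : IIA f) :
    ∃ i : ι, Decisive f ({i} : Set ι) :=
  exists_decisive_singleton_general hX f hP hI
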